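/- Let τ > 0, x = 0, and σ ∈ ℝ with 2σ > τ. Then (0, σ − τ/2) = argmin over (ξ, s) ∈ ℂ × ℝ of φ(ξ, s) + (1/(2τ))(|0 − ξ|² + (σ − s)²), where φ is the perspective function φ(ξ,s) = |ξ|²/(2s) + s/2 for s > 0, φ(0,0)=0, ∞ otherwise. -/

import Mathlib

/-!
Completing the square, `s / 2 + (σ - s) ^ 2 / (2τ) = σ / 2 - τ / 8 + (s - (σ - τ / 2)) ^ 2 / (2τ)`.
For `s > 0` the objective is this quantity plus the nonnegative terms `‖ξ‖² / (2s) + ‖ξ‖² / (2τ)`,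
so its minimum `σ / 2 - τ / 8` is attained exactly at `(0, σ - τ / 2)`, which is admissible
because `2σ > τ`. The same identity at `s = 0` shows that the other finite point `(0, 0)` of `φ`
gives a strictly larger value, and everywhere else `φ = ⊤`.
-/

noncomputable def phi (x : ℂ) (σ : ℝ) : EReal :=
  if 0 < σ then ((‖x‖ ^ 2 / (2 * σ) + σ / 2 : ℝ) : EReal)
  else if x = 0 ∧ σ = 0 then 0 else ⊤

lemma phi_of_pos {x : ℂ} {σ : ℝ} (hσ : 0 < σ) :
    phi x σ = ((‖x‖ ^ 2 / (2 * σ) + σ / 2 : ℝ) : EReal) := if_pos hσ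

lemma phi_zero_zero : phi 0 0 = 0 := by simp [phi]

lemma phi_eq_top {x : ℂ} {σ : ℝ} (hσ : ¬0 < σ) (hx : ¬(x = 0 ∧ σ = 0)) : phi x σ = ⊤ := by
  simp only [phi, if_neg hσ, if_neg hx]

lemma half_add_sq_div_eq (τ σ s : ℝ) (hτ : τ ≠ 0) :
    s / 2 + (σ - s) ^ 2 / (2 * τ) = σ / 2 - τ / 8 + (s - (σ - τ / 2)) ^ 2 / (2 * τ) := by
  field_simp
  ring

lemma lt_half_add_sq_div {τ σ s : ℝ} (hτ : 0 < τ) (hs : s ≠ σ - τ / 2) :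
    σ / 2 - τ / 8 < s / 2 + (σ - s) ^ 2 / (2 * τ) := by
  rw [half_add_sq_div_eq τ σ s hτ.ne']
  have : s - (σ - τ / 2) ≠ 0 := sub_ne_zero.mpr hs
  have : 0 < (s - (σ - τ / 2)) ^ 2 / (2 * τ) := by positivity
  linarith

lemma lt_prox_objective {E : Type*} [NormedAddCommGroup E] {τ σ s : ℝ} {ξ : E}
    (hτ : 0 < τ) (hs : 0 < s) (hne : (ξ, s) ≠ (0, σ - τ / 2)) :
    σ / 2 - τ / 8 < ‖ξ‖ ^ 2 / (2 * s) + s / 2 + (‖ξ‖ ^ 2 + (σ - s) ^ 2) / (2 * τ) := by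
  have hsplit : ‖ξ‖ ^ 2 / (2 * s) + s / 2 + (‖ξ‖ ^ 2 + (σ - s) ^ 2) / (2 * τ)
      = (‖ξ‖ ^ 2 / (2 * s) + ‖ξ‖ ^ 2 / (2 * τ)) + (s / 2 + (σ - s) ^ 2 / (2 * τ)) := by ring
  rw [hsplit]
  by_cases hξ : ξ = 0
  · have hs' : s ≠ σ - τ / 2 := fun h => hne (by rw [hξ, h])
    simpa [hξ] using lt_half_add_sq_div hτ hs'
  · have hnorm : 0 < ‖ξ‖ ^ 2 / (2 * s) + ‖ξ‖ ^ 2 / (2 * τ) := by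
      have : ‖ξ‖ ≠ 0 := norm_ne_zero_iff.mpr hξ
      positivity
    have hsq : 0 ≤ (s - (σ - τ / 2)) ^ 2 / (2 * τ) := by positivity
    rw [half_add_sq_div_eq τ σ s hτ.ne']
    linarith

lemma lt_phi_add_of_ne {τ σ s : ℝ} {ξ : ℂ} (hτ : 0 < τ) (hσ : 0 < σ - τ / 2)
    (hne : (ξ, s) ≠ (0, σ - τ / 2)) :
    ((σ / 2 - τ / 8 : ℝ) : EReal) < phi ξ s + ((‖ξ‖ ^ 2 + (σ - s) ^ 2) / (2 * τ) : ℝ) := by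
  by_cases hs : 0 < s
  · rw [phi_of_pos hs, ← EReal.coe_add, EReal.coe_lt_coe_iff]
    exact lt_prox_objective hτ hs hne
  by_cases h0 : ξ = 0 ∧ s = 0
  · obtain ⟨rfl, rfl⟩ := h0
    rw [phi_zero_zero, zero_add, EReal.coe_lt_coe_iff, norm_zero]
    simpa using lt_half_add_sq_div (σ := σ) (s := 0) hτ hσ.ne
  · rw [phi_eq_top hs h0, EReal.top_add_of_ne_bot (EReal.coe_ne_bot _)]
    exact EReal.coe_lt_top _

lemma phi_add_at_prox {τ σ : ℝ} (hτ : 0 < τ) (hσ : 0 < σ - τ / 2) :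
    phi 0 (σ - τ / 2) + ((‖(0 : ℂ) - 0‖ ^ 2 + (σ - (σ - τ / 2)) ^ 2) / (2 * τ) : ℝ)
      = ((σ / 2 - τ / 8 : ℝ) : EReal) := by
  rw [phi_of_pos hσ, ← EReal.coe_add, EReal.coe_eq_coe_iff, sub_zero, norm_zero,
    zero_pow two_ne_zero, zero_div, zero_add, zero_add]
  field_simp
  ring

theorem prox_case2 (τ : ℝ) (hτ : 0 < τ) (σ : ℝ) (h : τ < 2 * σ) :
    (∀ (ξ : ℂ) (s : ℝ),
      phi 0 (σ - τ / 2) +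
        (((‖(0 : ℂ) - 0‖ ^ 2 + (σ - (σ - τ / 2)) ^ 2) / (2 * τ) : ℝ) : EReal) ≤
        phi ξ s + (((‖(0 : ℂ) - ξ‖ ^ 2 + (σ - s) ^ 2) / (2 * τ) : ℝ) : EReal)) ∧
    ∀ (ξ : ℂ) (s : ℝ), (ξ, s) ≠ ((0 : ℂ), σ - τ / 2) →
      phi 0 (σ - τ / 2) +
        (((‖(0 : ℂ) - 0‖ ^ 2 + (σ - (σ - τ / 2)) ^ 2) / (2 * τ) : ℝ) : EReal) <
        phi ξ s + (((‖(0 : ℂ) - ξ‖ ^ 2 + (σ - s) ^ 2) / (2 * τ) : ℝ) : EReal) := by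
  have hσ : 0 < σ - τ / 2 := by linarith
  have strict : ∀ (ξ : ℂ) (s : ℝ), (ξ, s) ≠ ((0 : ℂ), σ - τ / 2) →
      phi 0 (σ - τ / 2) +
        (((‖(0 : ℂ) - 0‖ ^ 2 + (σ - (σ - τ / 2)) ^ 2) / (2 * τ) : ℝ) : EReal) <
        phi ξ s + (((‖(0 : ℂ) - ξ‖ ^ 2 + (σ - s) ^ 2) / (2 * τ) : ℝ) : EReal) := by
    intro ξ s hne
    rw [phi_add_at_prox hτ hσ, zero_sub, norm_neg]
    exact lt_phi_add_of_ne hτ hσ hne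
  refine ⟨fun ξ s => ?_, strict⟩
  by_cases hne : (ξ, s) = ((0 : ℂ), σ - τ / 2)
  · obtain ⟨rfl, rfl⟩ := Prod.ext_iff.mp hne
    exact le_rfl
  · exact (strict ξ s hne).le
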